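/- Let τ be a positive odd integer whose only prime factor is 3 (i.e., τ is a power of 3 greater than 1). Among squarefree integers δ ≡ 1 (mod 4) with μ(|δ|) = 1 and exactly two prime factors, the maximum of f_τ(δ) is 1/19, attained at δ = -15; consequently dens((-15)^τ)/A(τ) = 18/19 under Hooley's formula. -/

import Mathlib

/-!
For odd `δ` with exactly two prime factors `p ≠ q`, `f_τ(δ)` is the product of the two local
factors, each lying in `[0, 1]`. When `τ` is a power of `3`, a prime `ℓ ≥ 5` never divides `τ`, so
its local factor is `1 / (ℓ² - ℓ - 1) ≤ 1 / 19`; since `p` and `q` cannot both be `3`, the product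
is at most `1 / 19`, with equality for `δ = -15`, where the factor at `3` is `1 / (3 - 2) = 1`.
The Artin constant of an odd `τ` is a product of factors in `[1/2, 1)` which, away from the finitely
many primes dividing `τ`, differ from `1` by at most `2 / p²`; it is therefore nonzero and may be
divided out of Hooley's density.
-/

open ArithmeticFunction

/-- The Artin constant `A(τ)`. -/
noncomputable def artinA (τ : ℕ) : ℝ :=
  ∏' p : Nat.Primes,
    if (p : ℕ) ∣ τ then (1 - 1 / (((p : ℕ) : ℝ) - 1))
    else (1 - 1 / (((p : ℕ) : ℝ) * (((p : ℕ) : ℝ) - 1)))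

/-- Hooley's correction factor `f_τ(δ)`. -/
noncomputable def hooleyF (τ : ℕ) (δ : ℤ) : ℝ :=
  ∏ ℓ ∈ δ.natAbs.primeFactors,
    if ℓ ∣ τ then 1 / ((ℓ : ℝ) - 2) else 1 / ((ℓ : ℝ) ^ 2 - ℓ - 1)

/-- Hooley's density, as a function of `τ` and the discriminant `δ`. -/
noncomputable def hooleyDens (τ : ℕ) (δ : ℤ) : ℝ :=
  if δ % 4 = 1 then artinA τ * (1 - (moebius δ.natAbs : ℝ) * hooleyF τ δ)
  else artinA τ

noncomputable def hooleyFactor (τ ℓ : ℕ) : ℝ :=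
  if ℓ ∣ τ then 1 / ((ℓ : ℝ) - 2) else 1 / ((ℓ : ℝ) ^ 2 - ℓ - 1)

lemma hooleyF_eq_prod_hooleyFactor (τ : ℕ) (δ : ℤ) :
    hooleyF τ δ = ∏ ℓ ∈ δ.natAbs.primeFactors, hooleyFactor τ ℓ :=
  rfl

section hooleyFactor

variable {τ ℓ : ℕ}

lemma hooleyFactor_three (h : 3 ∣ τ) : hooleyFactor τ 3 = 1 := by
  norm_num [hooleyFactor, h]

lemma hooleyFactor_of_not_dvd (h : ¬ ℓ ∣ τ) :
    hooleyFactor τ ℓ = 1 / ((ℓ : ℝ) ^ 2 - ℓ - 1) :=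
  if_neg h

lemma hooleyFactor_nonneg (hℓ : 2 ≤ ℓ) : 0 ≤ hooleyFactor τ ℓ := by
  have : (2 : ℝ) ≤ ℓ := by exact_mod_cast hℓ
  unfold hooleyFactor
  split_ifs
  · exact one_div_nonneg.mpr (by linarith)
  · exact one_div_nonneg.mpr (by nlinarith)

lemma hooleyFactor_le_one (hℓ : 3 ≤ ℓ) : hooleyFactor τ ℓ ≤ 1 := by
  have : (3 : ℝ) ≤ ℓ := by exact_mod_cast hℓ
  unfold hooleyFactor
  split_ifs
  · exact div_le_one_of_le₀ (by linarith) (by linarith)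
  · exact div_le_one_of_le₀ (by nlinarith) (by nlinarith)

lemma hooleyFactor_le_one_div_nineteen (hℓ : 5 ≤ ℓ) (h : ¬ ℓ ∣ τ) :
    hooleyFactor τ ℓ ≤ 1 / 19 := by
  have : (5 : ℝ) ≤ ℓ := by exact_mod_cast hℓ
  rw [hooleyFactor_of_not_dvd h]
  exact one_div_le_one_div_of_le (by norm_num) (by nlinarith)

end hooleyFactor

lemma hooleyF_le_of_card_primeFactors_eq_two {τ : ℕ} (hτ : ∀ ℓ, ℓ.Prime → ℓ ∣ τ → ℓ ≤ 3)
    {δ : ℤ} (hδ : Odd δ) (hcard : δ.natAbs.primeFactors.card = 2) :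
    hooleyF τ δ ≤ 1 / 19 := by
  obtain ⟨p, q, hpq, hpqδ⟩ := Finset.card_eq_two.mp hcard
  have hfactor : ∀ ℓ ∈ δ.natAbs.primeFactors,
      0 ≤ hooleyFactor τ ℓ ∧ hooleyFactor τ ℓ ≤ 1 ∧ (ℓ ≠ 3 → hooleyFactor τ ℓ ≤ 1 / 19) := by
    intro ℓ hℓ
    have hprime := Nat.prime_of_mem_primeFactors hℓ
    obtain ⟨m, rfl⟩ := (Int.natAbs_odd.mpr hδ).of_dvd_nat (Nat.dvd_of_mem_primeFactors hℓ)
    have := hprime.two_le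
    refine ⟨hooleyFactor_nonneg (by omega), hooleyFactor_le_one (by omega), fun h3 => ?_⟩
    exact hooleyFactor_le_one_div_nineteen (by omega) fun hdvd => by
      have := hτ _ hprime hdvd
      omega
  obtain ⟨hp0, hp1, hp⟩ := hfactor p (by simp [hpqδ])
  obtain ⟨hq0, hq1, hq⟩ := hfactor q (by simp [hpqδ])
  rw [hooleyF_eq_prod_hooleyFactor, hpqδ, Finset.prod_pair hpq]
  rcases eq_or_ne p 3 with rfl | hp3
  · exact (mul_le_of_le_one_left hq0 hp1).trans (hq (Ne.symm hpq))
  · exact (mul_le_of_le_one_right hp0 hq1).trans (hp hp3)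

lemma hooleyF_neg_fifteen {τ : ℕ} (h3 : 3 ∣ τ) (h5 : ¬ 5 ∣ τ) : hooleyF τ (-15) = 1 / 19 := by
  have h15 : (15 : ℕ).primeFactors = {3, 5} := by
    rw [show 15 = 3 * 5 by rfl, Nat.primeFactors_mul (by norm_num) (by norm_num),
      Nat.prime_three.primeFactors, Nat.prime_five.primeFactors]
    rfl
  rw [hooleyF_eq_prod_hooleyFactor, show (-15 : ℤ).natAbs = 15 by rfl, h15,
    Finset.prod_pair (by norm_num), hooleyFactor_three h3, hooleyFactor_of_not_dvd h5]
  norm_num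

lemma moebius_fifteen : moebius 15 = 1 := by
  rw [show 15 = 3 * 5 by rfl, isMultiplicative_moebius.map_mul_of_coprime (by norm_num),
    moebius_apply_prime Nat.prime_three, moebius_apply_prime Nat.prime_five]
  rfl

noncomputable def artinDefect (τ p : ℕ) : ℝ :=
  if p ∣ τ then 1 / ((p : ℝ) - 1) else 1 / ((p : ℝ) * ((p : ℝ) - 1))

lemma artinA_eq_tprod (τ : ℕ) : artinA τ = ∏' p : Nat.Primes, (1 + -artinDefect τ p) := by
  unfold artinA artinDefect
  congr! 2 with p
  split_ifs <;> ring

section artinDefect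

variable {τ p : ℕ}

lemma artinDefect_nonneg (hp : 2 ≤ p) : 0 ≤ artinDefect τ p := by
  have : (2 : ℝ) ≤ p := by exact_mod_cast hp
  unfold artinDefect
  split_ifs
  · exact one_div_nonneg.mpr (by linarith)
  · exact one_div_nonneg.mpr (by nlinarith)

lemma artinDefect_le_half (hτ : Odd τ) (hp : p.Prime) : artinDefect τ p ≤ 1 / 2 := by
  have : (2 : ℝ) ≤ p := by exact_mod_cast hp.two_le
  unfold artinDefect
  split_ifs with hdvd
  · have : (3 : ℝ) ≤ p := by
      obtain ⟨m, rfl⟩ := hτ.of_dvd_nat hdvd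
      have := hp.two_le
      exact_mod_cast (show 3 ≤ 2 * m + 1 by omega)
    rw [div_le_div_iff₀ (by linarith) (by norm_num)]
    linarith
  · rw [div_le_div_iff₀ (by nlinarith) (by norm_num)]
    nlinarith

lemma artinDefect_le_of_not_dvd (hp : 2 ≤ p) (h : ¬ p ∣ τ) :
    artinDefect τ p ≤ 2 * (1 / (p : ℝ) ^ 2) := by
  have : (2 : ℝ) ≤ p := by exact_mod_cast hp
  rw [artinDefect, if_neg h, div_le_iff₀ (by nlinarith)]
  field_simp
  nlinarith

end artinDefect

lemma summable_artinDefect {τ : ℕ} (hτ : τ ≠ 0) :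
    Summable fun p : Nat.Primes => artinDefect τ p := by
  have hsq : Summable fun p : Nat.Primes => 2 * (1 / ((p : ℕ) : ℝ) ^ 2) :=
    ((Real.summable_one_div_nat_pow.mpr one_lt_two).comp_injective
      Nat.Primes.coe_nat_injective).mul_left 2
  refine hsq.of_norm_bounded_eventually (Filter.eventually_cofinite.mpr ?_)
  refine (τ.divisors.finite_toSet.preimage Nat.Primes.coe_nat_injective.injOn).subset
    fun p hp => Nat.mem_divisors.mpr ⟨?_, hτ⟩
  by_contra hdvd
  refine hp ?_
  rw [Real.norm_of_nonneg (artinDefect_nonneg p.2.two_le)]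
  exact artinDefect_le_of_not_dvd p.2.two_le hdvd

lemma artinA_ne_zero {τ : ℕ} (hτ : Odd τ) : artinA τ ≠ 0 := by
  rw [artinA_eq_tprod]
  refine tprod_one_add_ne_zero_of_summable (fun p => ?_) ?_
  · linarith [artinDefect_le_half hτ p.2]
  · simpa only [norm_neg, Real.norm_eq_abs] using (summable_artinDefect hτ.pos.ne').abs

lemma hooleyDens_div_artinA {τ : ℕ} {δ : ℤ} (hδ : δ % 4 = 1) (hA : artinA τ ≠ 0) :
    hooleyDens τ δ / artinA τ = 1 - moebius δ.natAbs * hooleyF τ δ := by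
  rw [hooleyDens, if_pos hδ, mul_div_cancel_left₀ _ hA]

theorem hooleyF_max_power_of_three (τ : ℕ) (k : ℕ) (hk : 1 ≤ k) (hτ : τ = 3 ^ k) :
    (∀ δ : ℤ, Squarefree δ → δ % 4 = 1 → moebius δ.natAbs = 1 →
      δ.natAbs.primeFactors.card = 2 → hooleyF τ δ ≤ 1 / 19) ∧
    hooleyF τ (-15) = 1 / 19 ∧
    hooleyDens τ (-15) / artinA τ = 18 / 19 := by
  subst hτ
  have hsmooth : ∀ ℓ, ℓ.Prime → ℓ ∣ 3 ^ k → ℓ ≤ 3 := fun ℓ hℓ hdvd =>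
    ((Nat.prime_dvd_prime_iff_eq hℓ Nat.prime_three).mp (hℓ.dvd_of_dvd_pow hdvd)).le
  have hf := hooleyF_neg_fifteen (dvd_pow_self 3 (by omega))
    fun h5 => absurd (hsmooth 5 Nat.prime_five h5) (by norm_num)
  refine ⟨fun δ _ hδ _ hcard =>
    hooleyF_le_of_card_primeFactors_eq_two hsmooth (Int.odd_iff.mpr (by omega)) hcard, hf, ?_⟩
  rw [hooleyDens_div_artinA (by decide) (artinA_ne_zero (Odd.pow (by decide))), hf,
    show (-15 : ℤ).natAbs = 15 by rfl, moebius_fifteen]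
  norm_num
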